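/- arXiv:1901.04478 — 5 statements merged into one kernel-verified Lean document; each statement's English description precedes it below -/
import Mathlib

section
/- Let a, b > 1 and let ψ : ℕ → ℝ_{>0} satisfy Σ_{n=1}^∞ 1/ψ(n) < ∞. Then there exists ω : ℕ → ℝ_{>0} with Σ_{n=1}^∞ 1/ω(n) < ∞ such that for all n ∈ ℕ, ω(⌊log_b n⌋) ≤ ψ(⌊log_a n⌋). -/
/-!
With `c = log_a b > 0` we have `log_a n = c · log_b n`, so `⌊log_a n⌋` lies in the window
`[⌊c k⌋, ⌊c (k + 1)⌋]` of `k = ⌊log_b n⌋`. Taking `1 / ω k` to be the sum of `1 / ψ` over that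
window gives `ω k ≤ ψ m` on the window, and since each `m` lies in at most `⌊1/c⌋ + 2` windows,
`∑ 1 / ω ≤ (⌊1/c⌋ + 2) ∑ 1 / ψ`.
-/

open Finset

theorem Finset.card_le_of_forall_le_add {s : Finset ℕ} {L : ℕ}
    (h : ∀ i ∈ s, ∀ j ∈ s, i ≤ j + L) : #s ≤ L + 1 := by
  rcases s.eq_empty_or_nonempty with rfl | hs
  · simp
  have hsub : s ⊆ Icc (s.min' hs) (s.min' hs + L) := fun i hi =>
    mem_Icc.2 ⟨s.min'_le i hi, h i hi _ (s.min'_mem hs)⟩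
  have := card_le_card hsub
  rw [Nat.card_Icc] at this
  omega

theorem summable_sum_of_bounded_overlap {f : ℕ → ℝ} (hf : ∀ m, 0 ≤ f m) (hsum : Summable f)
    (I : ℕ → Finset ℕ) (L : ℕ) (hI : ∀ m k k', m ∈ I k → m ∈ I k' → k ≤ k' + L) :
    Summable fun k => ∑ m ∈ I k, f m := by
  refine summable_of_sum_range_le (c := (L + 1) * ∑' m, f m)
    (fun k => sum_nonneg fun m _ => hf m) fun N => ?_
  set U := (range N).biUnion I
  have hcard : ∀ m, #{k ∈ range N | m ∈ I k} ≤ L + 1 := fun m =>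
    card_le_of_forall_le_add fun k hk k' hk' =>
      hI m k k' (mem_filter.1 hk).2 (mem_filter.1 hk').2
  calc ∑ k ∈ range N, ∑ m ∈ I k, f m
      = ∑ m ∈ U, ∑ k ∈ range N with m ∈ I k, f m :=
        sum_comm' fun k m => by simp only [U, mem_biUnion, mem_filter]; grind
    _ = ∑ m ∈ U, #{k ∈ range N | m ∈ I k} * f m := by simp only [sum_const, nsmul_eq_mul]
    _ ≤ ∑ m ∈ U, (L + 1) * f m :=
        sum_le_sum fun m _ => mul_le_mul_of_nonneg_right (by exact_mod_cast hcard m) (hf m)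
    _ = (L + 1) * ∑ m ∈ U, f m := (mul_sum ..).symm
    _ ≤ (L + 1) * ∑' m, f m :=
        mul_le_mul_of_nonneg_left (hsum.sum_le_tsum U fun m _ => hf m) (by positivity)

noncomputable def floorWindow (c : ℝ) (k : ℕ) : Finset ℕ := Icc ⌊c * k⌋₊ ⌊c * (k + 1)⌋₊

theorem floorWindow_nonempty {c : ℝ} (hc : 0 ≤ c) (k : ℕ) : (floorWindow c k).Nonempty :=
  nonempty_Icc.2 (Nat.floor_le_floor (by nlinarith))

theorem floor_mul_mem_floorWindow {c x : ℝ} (hc : 0 ≤ c) (hx : 0 ≤ x) :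
    ⌊c * x⌋₊ ∈ floorWindow c ⌊x⌋₊ :=
  mem_Icc.2 ⟨Nat.floor_le_floor (mul_le_mul_of_nonneg_left (Nat.floor_le hx) hc),
    Nat.floor_le_floor (mul_le_mul_of_nonneg_left (Nat.lt_floor_add_one x).le hc)⟩

theorem le_add_of_mem_floorWindow {c : ℝ} (hc : 0 < c) {m k k' : ℕ}
    (hk : m ∈ floorWindow c k) (hk' : m ∈ floorWindow c k') : k ≤ k' + (⌊c⁻¹⌋₊ + 1) := by
  have hlow : c * k < m + 1 := by
    exact_mod_cast (Nat.floor_lt (by positivity)).1 (Nat.lt_succ_of_le (mem_Icc.1 hk).1)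
  have hup : (m : ℝ) ≤ c * (k' + 1) :=
    (Nat.cast_le.2 (mem_Icc.1 hk').2).trans (Nat.floor_le (by positivity))
  have hinv : c * c⁻¹ < c * (⌊c⁻¹⌋₊ + 1) := mul_lt_mul_of_pos_left (Nat.lt_floor_add_one _) hc
  rw [mul_inv_cancel₀ hc.ne'] at hinv
  have : (k : ℝ) < k' + (⌊c⁻¹⌋₊ + 1) + 1 := lt_of_mul_lt_mul_left (by linarith) hc.le
  exact_mod_cast Nat.lt_succ_iff.1 (by exact_mod_cast this)

theorem one_div_sum_one_div_le {ι : Type*} {s : Finset ι} {ψ : ι → ℝ} (hψ : ∀ i ∈ s, 0 < ψ i)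
    {i : ι} (hi : i ∈ s) : 1 / ∑ j ∈ s, 1 / ψ j ≤ ψ i := by
  have hle : 1 / ψ i ≤ ∑ j ∈ s, 1 / ψ j :=
    single_le_sum (fun j hj => (one_div_pos.2 (hψ j hj)).le) hi
  exact (one_div_le ((one_div_pos.2 (hψ i hi)).trans_le hle) (hψ i hi)).2 hle

/-- For `a, b > 1` and `ψ : ℕ → ℝ_{>0}` with summable reciprocals, there
exists `ω : ℕ → ℝ_{>0}` with summable reciprocals such that
`ω(⌊log_b n⌋) ≤ ψ(⌊log_a n⌋)` for all `n ≥ 1`. -/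
theorem stmt2 (a b : ℝ) (ha : 1 < a) (hb : 1 < b)
    (ψ : ℕ → ℝ) (hψ : ∀ n, 0 < ψ n) (hsum : Summable fun n => 1 / ψ n) :
    ∃ ω : ℕ → ℝ, (∀ n, 0 < ω n) ∧ (Summable fun n => 1 / ω n) ∧
      ∀ n : ℕ, 1 ≤ n → ω ⌊Real.logb b n⌋₊ ≤ ψ ⌊Real.logb a n⌋₊ := by
  set c := Real.logb a b
  have hc : 0 < c := Real.logb_pos ha hb
  refine ⟨fun k => 1 / ∑ m ∈ floorWindow c k, 1 / ψ m, fun k => ?_, ?_, fun n hn => ?_⟩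
  · exact one_div_pos.2 <|
      sum_pos (fun m _ => one_div_pos.2 (hψ m)) (floorWindow_nonempty hc.le k)
  · simp only [one_div_one_div]
    exact summable_sum_of_bounded_overlap (fun m => (one_div_pos.2 (hψ m)).le) hsum _ _
      fun _ _ _ => le_add_of_mem_floorWindow hc
  · have hmem := floor_mul_mem_floorWindow hc.le (Real.logb_nonneg hb (Nat.one_le_cast.2 hn))
    rw [Real.mul_logb (by positivity) hb.ne' (by linarith)] at hmem
    exact one_div_sum_one_div_le (fun m _ => hψ m) hmem
end

section
/- The space of quasi-Hölder continuous functions H = {h ∈ L^∞(X, μ) : |h|_{ε₀} < ∞}, where |h|_{ε₀} = sup_{0<ε≤ε₀} (1/ε)·∫ osc(h, B(ε,x)) dμ(x), equipped with the norm ‖h‖_{ε₀} = |h|_∞ + |h|_{ε₀}, is a Banach space: every Cauchy sequence with respect to ‖·‖_{ε₀} converges in H. -/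
/-!
The Cauchy sequence is in particular Cauchy in `L^∞`, so it has an `L^∞` limit `g`.
Since `osc(f, C) ≤ osc(f', C) + 2‖f - f'‖_∞`, for each fixed `ε` the integral
`∫ osc(·, B(ε, x)) dμ(x)` is continuous along `L^∞` convergence, so `|·|_{ε₀}` is lower
semicontinuous there. Letting `r → ∞` in `‖h_n - h_r‖_{ε₀} < δ` gives `‖h_n - g‖_{ε₀} ≤ 2δ`,
and subadditivity of the oscillation, `g = h_N - (h_N - g)`, gives `|g|_{ε₀} < ∞`.
-/

open MeasureTheory Filter
open scoped ENNReal

/-- Essential oscillation of `h` on the set `C`. -/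
noncomputable def osc {α : Type*} [MeasurableSpace α] (μ : Measure α)
    (h : α → ℝ) (C : Set α) : ℝ :=
  essSup h (μ.restrict C) - essInf h (μ.restrict C)

/-- The quasi-Hölder seminorm `|h|_{ε₀} = sup_{0<ε≤ε₀} (1/ε)·∫ osc(h, B(ε,x)) dμ(x)`,
valued in `ℝ≥0∞`, for a family of balls `B`. -/
noncomputable def hSemi {α : Type*} [MeasurableSpace α] (μ : Measure α)
    (B : ℝ → α → Set α) (ε₀ : ℝ) (h : α → ℝ) : ℝ≥0∞ :=
  ⨆ ε : Set.Ioc (0 : ℝ) ε₀,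
    (∫⁻ x, ENNReal.ofReal (osc μ h (B ε.1 x)) ∂μ) / ENNReal.ofReal ε.1

/-- The quasi-Hölder norm `‖h‖_{ε₀} = |h|_∞ + |h|_{ε₀}` (in `ℝ≥0∞`). -/
noncomputable def hNorm {α : Type*} [MeasurableSpace α] (μ : Measure α)
    (B : ℝ → α → Set α) (ε₀ : ℝ) (h : α → ℝ) : ℝ≥0∞ :=
  eLpNorm h ⊤ μ + hSemi μ B ε₀ h

open scoped Topology

section Osc

variable {α : Type*} [MeasurableSpace α] {μ : Measure α}

lemma osc_of_restrict_eq_zero (f : α → ℝ) {C : Set α} (hC : μ.restrict C = 0) :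
    osc μ f C = 0 := by
  simp [osc, essSup, essInf, hC, limsup, liminf, limsSup, limsInf]

lemma osc_le_of_ae_mem_Icc {f : α → ℝ} {C : Set α} {a b : ℝ} (hab : a ≤ b)
    (hf : ∀ᵐ x ∂μ.restrict C, f x ∈ Set.Icc a b) : osc μ f C ≤ b - a := by
  by_cases hC : μ.restrict C = 0
  · rw [osc_of_restrict_eq_zero f hC]; linarith
  have : (ae (μ.restrict C)).NeBot := ae_neBot.2 hC
  have hsup : essSup f (μ.restrict C) ≤ b :=
    essSup_le_of_ae_le b (hf.mono fun x hx => hx.2)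
      (isCoboundedUnder_le_of_eventually_le _ (hf.mono fun x hx => hx.1))
  have hinf : a ≤ essInf f (μ.restrict C) :=
    le_essInf_of_ae_le a (hf.mono fun x hx => hx.1)
      (isCoboundedUnder_ge_of_eventually_le _ (hf.mono fun x hx => hx.2))
  rw [osc]
  linarith

lemma ae_restrict_mem_Icc_essInf_essSup {u : α → ℝ} {M : ℝ} (hu : ∀ᵐ x ∂μ, |u x| ≤ M)
    (C : Set α) :
    ∀ᵐ x ∂μ.restrict C,
      u x ∈ Set.Icc (essInf u (μ.restrict C)) (essSup u (μ.restrict C)) := by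
  have hu' : ∀ᵐ x ∂μ.restrict C, |u x| ≤ M := ae_restrict_of_ae hu
  filter_upwards [ae_essInf_le ⟨-M, hu'.mono fun x hx => (abs_le.1 hx).1⟩,
    ae_le_essSup ⟨M, hu'.mono fun x hx => (abs_le.1 hx).2⟩] with x hinf hsup
  exact ⟨hinf, hsup⟩

lemma osc_sub_le {u v : α → ℝ} {Mu Mv : ℝ} (hu : ∀ᵐ x ∂μ, |u x| ≤ Mu)
    (hv : ∀ᵐ x ∂μ, |v x| ≤ Mv) (C : Set α) :
    osc μ (u - v) C ≤ osc μ u C + osc μ v C := by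
  by_cases hC : μ.restrict C = 0
  · simp [osc_of_restrict_eq_zero _ hC]
  have : (ae (μ.restrict C)).NeBot := ae_neBot.2 hC
  have hsub : ∀ᵐ x ∂μ.restrict C, (u - v) x ∈ Set.Icc
      (essInf u (μ.restrict C) - essSup v (μ.restrict C))
      (essSup u (μ.restrict C) - essInf v (μ.restrict C)) := by
    filter_upwards [ae_restrict_mem_Icc_essInf_essSup hu C,
      ae_restrict_mem_Icc_essInf_essSup hv C] with x hux hvx
    exact ⟨by simp only [Pi.sub_apply]; linarith [hux.1, hvx.2],
      by simp only [Pi.sub_apply]; linarith [hux.2, hvx.1]⟩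
  obtain ⟨x, hx⟩ := hsub.exists
  refine (osc_le_of_ae_mem_Icc (hx.1.trans hx.2) hsub).trans_eq ?_
  rw [osc, osc]
  ring

lemma osc_le_osc_add_two_mul {f f' : α → ℝ} {c M : ℝ} (hc : 0 ≤ c)
    (hdiff : ∀ᵐ x ∂μ, |f x - f' x| ≤ c) (hf' : ∀ᵐ x ∂μ, |f' x| ≤ M) (C : Set α) :
    osc μ f C ≤ osc μ f' C + 2 * c := by
  have hdiff' : ∀ᵐ x ∂μ, |(f' - f) x| ≤ c :=
    hdiff.mono fun x hx => by rwa [Pi.sub_apply, abs_sub_comm]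
  have hosc : osc μ (f' - f) C ≤ 2 * c := by
    have := osc_le_of_ae_mem_Icc (neg_le_self hc)
      (ae_restrict_of_ae (hdiff'.mono fun x hx => abs_le.1 hx) : ∀ᵐ x ∂μ.restrict C, _)
    linarith
  calc osc μ f C = osc μ (f' - (f' - f)) C := by rw [sub_sub_cancel]
    _ ≤ osc μ f' C + osc μ (f' - f) C := osc_sub_le hf' hdiff' C
    _ ≤ osc μ f' C + 2 * c := by linarith

end Osc

section Linfty

variable {α E : Type*} [MeasurableSpace α] {μ : Measure α} [NormedAddCommGroup E]

lemma ae_abs_le_toReal_eLpNorm_top {f : α → ℝ} (hf : eLpNorm f ⊤ μ ≠ ⊤) :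
    ∀ᵐ x ∂μ, |f x| ≤ (eLpNorm f ⊤ μ).toReal := by
  rw [eLpNorm_exponent_top] at hf ⊢
  filter_upwards [enorm_ae_le_eLpNormEssSup f μ] with x hx
  simpa [Real.norm_eq_abs] using ENNReal.toReal_mono hf hx

lemma eLpNorm_top_le_of_tendsto {ι : Type*} {l : Filter ι} [l.NeBot] {f : ι → α → E}
    {F : α → E} {K : ℝ≥0∞} (hlim : Tendsto (fun i => eLpNorm (F - f i) ⊤ μ) l (𝓝 0))
    (hK : ∀ᶠ i in l, eLpNorm (f i) ⊤ μ ≤ K) :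
    eLpNorm F ⊤ μ ≤ K := by
  have hbound : ∀ᶠ i in l, eLpNorm F ⊤ μ ≤ K + eLpNorm (F - f i) ⊤ μ := by
    filter_upwards [hK] with i hKi
    calc eLpNorm F ⊤ μ = eLpNorm (f i + (F - f i)) ⊤ μ := by rw [add_sub_cancel]
      _ ≤ eLpNorm (f i) ⊤ μ + eLpNorm (F - f i) ⊤ μ := by
          simp only [eLpNorm_exponent_top]; exact eLpNormEssSup_add_le
      _ ≤ K + eLpNorm (F - f i) ⊤ μ := by gcongr
  simpa only [add_zero] using ge_of_tendsto (tendsto_const_nhds.add hlim) hbound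

lemma exists_tendsto_eLpNorm_of_cauchy {p : ℝ≥0∞} [Fact (1 ≤ p)] [CompleteSpace E]
    {f : ℕ → α → E} (hf : ∀ n, MemLp (f n) p μ)
    (hcau : ∀ δ : ℝ, 0 < δ → ∃ N, ∀ m ≥ N, ∀ n ≥ N, eLpNorm (f m - f n) p μ < ENNReal.ofReal δ) :
    ∃ g : α → E, StronglyMeasurable g ∧ MemLp g p μ ∧
      Tendsto (fun n => eLpNorm (f n - g) p μ) atTop (𝓝 0) := by
  set F : ℕ → Lp E p μ := fun n => (hf n).toLp (f n)
  have hF : ∀ n, ⇑(F n) =ᵐ[μ] f n := fun n => (hf n).coeFn_toLp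
  have hcauF : CauchySeq F := by
    refine Metric.cauchySeq_iff.2 fun δ hδ => (hcau δ hδ).imp fun N hN m hm n hn => ?_
    rw [Lp.dist_def, eLpNorm_congr_ae ((hF m).sub (hF n))]
    exact ENNReal.toReal_lt_of_lt_ofReal (hN m hm n hn)
  obtain ⟨G, hG⟩ := cauchySeq_tendsto_of_complete hcauF
  refine ⟨G, Lp.stronglyMeasurable G, Lp.memLp G, ?_⟩
  refine ((Lp.tendsto_Lp_iff_tendsto_eLpNorm' F G).1 hG).congr fun n => ?_
  exact eLpNorm_congr_ae ((hF n).sub EventuallyEq.rfl)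

end Linfty

section HSemi

variable {α : Type*} [MeasurableSpace α] {μ : Measure α} (B : ℝ → α → Set α) (ε₀ : ℝ)

lemma lintegral_osc_le_hSemi_mul (f : α → ℝ) {ε : ℝ} (hε : ε ∈ Set.Ioc 0 ε₀) :
    ∫⁻ x, ENNReal.ofReal (osc μ f (B ε x)) ∂μ ≤ hSemi μ B ε₀ f * ENNReal.ofReal ε :=
  (ENNReal.div_le_iff (ENNReal.ofReal_pos.2 hε.1).ne' ENNReal.ofReal_ne_top).1 <|
    le_iSup (fun e : Set.Ioc 0 ε₀ =>
      (∫⁻ x, ENNReal.ofReal (osc μ f (B e.1 x)) ∂μ) / ENNReal.ofReal e.1) ⟨ε, hε⟩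

lemma hSemi_le_of_lintegral_osc_le {f : α → ℝ} {K : ℝ≥0∞}
    (h : ∀ ε ∈ Set.Ioc 0 ε₀, ∫⁻ x, ENNReal.ofReal (osc μ f (B ε x)) ∂μ ≤ K * ENNReal.ofReal ε) :
    hSemi μ B ε₀ f ≤ K :=
  iSup_le fun e =>
    (ENNReal.div_le_iff (ENNReal.ofReal_pos.2 e.2.1).ne' ENNReal.ofReal_ne_top).2 (h e.1 e.2)

lemma hSemi_sub_le {u v : α → ℝ} (hu : eLpNorm u ⊤ μ ≠ ⊤) (hv : eLpNorm v ⊤ μ ≠ ⊤)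
    (hv_osc : ∀ ε, Measurable fun x => osc μ v (B ε x)) :
    hSemi μ B ε₀ (u - v) ≤ hSemi μ B ε₀ u + hSemi μ B ε₀ v := by
  refine hSemi_le_of_lintegral_osc_le B ε₀ fun ε hε => ?_
  calc ∫⁻ x, ENNReal.ofReal (osc μ (u - v) (B ε x)) ∂μ
      ≤ ∫⁻ x, (ENNReal.ofReal (osc μ u (B ε x)) + ENNReal.ofReal (osc μ v (B ε x))) ∂μ :=
        lintegral_mono fun x => (ENNReal.ofReal_le_ofReal (osc_sub_le
          (ae_abs_le_toReal_eLpNorm_top hu) (ae_abs_le_toReal_eLpNorm_top hv) _)).trans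
          ENNReal.ofReal_add_le
    _ = ∫⁻ x, ENNReal.ofReal (osc μ u (B ε x)) ∂μ
          + ∫⁻ x, ENNReal.ofReal (osc μ v (B ε x)) ∂μ :=
        lintegral_add_right _ (hv_osc ε).ennreal_ofReal
    _ ≤ (hSemi μ B ε₀ u + hSemi μ B ε₀ v) * ENNReal.ofReal ε := by
        rw [add_mul]
        exact add_le_add (lintegral_osc_le_hSemi_mul B ε₀ u hε)
          (lintegral_osc_le_hSemi_mul B ε₀ v hε)

lemma hSemi_le_of_tendsto_eLpNorm_top [IsFiniteMeasure μ] {ι : Type*} {l : Filter ι} [l.NeBot]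
    {f : ι → α → ℝ} {F : α → ℝ} {K : ℝ≥0∞}
    (hf : ∀ᶠ i in l, eLpNorm (f i) ⊤ μ ≠ ⊤)
    (hlim : Tendsto (fun i => eLpNorm (F - f i) ⊤ μ) l (𝓝 0))
    (hK : ∀ᶠ i in l, hSemi μ B ε₀ (f i) ≤ K) :
    hSemi μ B ε₀ F ≤ K := by
  refine hSemi_le_of_lintegral_osc_le B ε₀ fun ε hε => ?_
  set c : ι → ℝ := fun i => (eLpNorm (F - f i) ⊤ μ).toReal
  have hc : Tendsto c l (𝓝 0) := (ENNReal.tendsto_toReal ENNReal.zero_ne_top).comp hlim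
  have hbound : ∀ᶠ i in l, ∫⁻ x, ENNReal.ofReal (osc μ F (B ε x)) ∂μ
      ≤ K * ENNReal.ofReal ε + ENNReal.ofReal (2 * c i) * μ Set.univ := by
    filter_upwards [hf, hK, hlim.eventually_ne ENNReal.zero_ne_top] with i hfi hKi hfin
    calc ∫⁻ x, ENNReal.ofReal (osc μ F (B ε x)) ∂μ
        ≤ ∫⁻ x, (ENNReal.ofReal (osc μ (f i) (B ε x)) + ENNReal.ofReal (2 * c i)) ∂μ :=
          lintegral_mono fun x => (ENNReal.ofReal_le_ofReal (osc_le_osc_add_two_mul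
            ENNReal.toReal_nonneg (ae_abs_le_toReal_eLpNorm_top hfin)
            (ae_abs_le_toReal_eLpNorm_top hfi) _)).trans ENNReal.ofReal_add_le
      _ = ∫⁻ x, ENNReal.ofReal (osc μ (f i) (B ε x)) ∂μ
            + ENNReal.ofReal (2 * c i) * μ Set.univ := by
          rw [lintegral_add_right _ measurable_const, lintegral_const]
      _ ≤ K * ENNReal.ofReal ε + ENNReal.ofReal (2 * c i) * μ Set.univ := by
          gcongr
          exact (lintegral_osc_le_hSemi_mul B ε₀ (f i) hε).trans (by gcongr)
  have hlim' : Tendsto (fun i => K * ENNReal.ofReal ε + ENNReal.ofReal (2 * c i) * μ Set.univ)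
      l (𝓝 (K * ENNReal.ofReal ε)) := by
    have h2c : Tendsto (fun i => ENNReal.ofReal (2 * c i)) l (𝓝 0) := by
      have h2c := hc.const_mul 2
      rw [mul_zero] at h2c
      simpa only [Function.comp_def, ENNReal.ofReal_zero] using
        (ENNReal.continuous_ofReal.tendsto 0).comp h2c
    simpa using tendsto_const_nhds.add (ENNReal.Tendsto.mul_const h2c (.inr (measure_ne_top μ _)))
  exact ge_of_tendsto hlim' hbound


lemma tendsto_hNorm_sub_of_cauchy [IsFiniteMeasure μ] {f : ℕ → α → ℝ} {g : α → ℝ}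
    (hlim : Tendsto (fun n => eLpNorm (f n - g) ⊤ μ) atTop (𝓝 0))
    (hcau : ∀ δ : ℝ, 0 < δ → ∃ N, ∀ m ≥ N, ∀ n ≥ N,
      hNorm μ B ε₀ (f m - f n) < ENNReal.ofReal δ) :
    Tendsto (fun n => hNorm μ B ε₀ (f n - g)) atTop (𝓝 0) := by
  refine ENNReal.tendsto_nhds_zero.2 fun ε hε => ?_
  obtain ⟨δ, hδ, hδε⟩ : ∃ δ : ℝ, 0 < δ ∧ ENNReal.ofReal δ + ENNReal.ofReal δ ≤ ε := by
    obtain ⟨r, hr, hr0, hrε⟩ := ENNReal.lt_iff_exists_real_btwn.1 hε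
    refine ⟨r / 2, by simpa using hr0, ?_⟩
    rw [← ENNReal.ofReal_add (by positivity) (by positivity), add_halves]
    exact hrε.le
  obtain ⟨N, hN⟩ := hcau δ hδ
  filter_upwards [eventually_ge_atTop N] with n hn
  have hsmall : ∀ᶠ r in atTop, hNorm μ B ε₀ (f n - f r) < ENNReal.ofReal δ :=
    eventually_atTop.2 ⟨N, hN n hn⟩
  have hlim_n : Tendsto (fun r => eLpNorm ((f n - g) - (f n - f r)) ⊤ μ) atTop (𝓝 0) := by
    simpa only [sub_sub_sub_cancel_left] using hlim
  refine le_trans (add_le_add ?_ ?_) hδε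
  · exact eLpNorm_top_le_of_tendsto hlim_n (hsmall.mono fun r hr => le_self_add.trans hr.le)
  · refine hSemi_le_of_tendsto_eLpNorm_top B ε₀ ?_ hlim_n
      (hsmall.mono fun r hr => le_add_self.trans hr.le)
    exact hsmall.mono fun r hr => (le_self_add.trans_lt (hr.trans ENNReal.ofReal_lt_top)).ne

end HSemi

theorem stmt4_general {α : Type*} [MeasurableSpace α] (μ : Measure α) [IsProbabilityMeasure μ]
    (B : ℝ → α → Set α) (ε₀ : ℝ)
    (hBmeas : ∀ (h : α → ℝ) (ε : ℝ), Measurable fun x => osc μ h (B ε x))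
    (h : ℕ → α → ℝ) (hmeas : ∀ n, Measurable (h n))
    (hbdd : ∀ n, eLpNorm (h n) ⊤ μ < ⊤)
    (hfin : ∀ n, hSemi μ B ε₀ (h n) < ⊤)
    (hcauchy : ∀ δ : ℝ, 0 < δ → ∃ N : ℕ, ∀ p ≥ N, ∀ r ≥ N,
      hNorm μ B ε₀ (fun x => h p x - h r x) < ENNReal.ofReal δ) :
    ∃ g : α → ℝ, Measurable g ∧ eLpNorm g ⊤ μ < ⊤ ∧ hSemi μ B ε₀ g < ⊤ ∧
      Tendsto (fun n => hNorm μ B ε₀ (fun x => h n x - g x)) atTop (nhds 0) := by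
  have : Fact ((1 : ℝ≥0∞) ≤ ⊤) := ⟨le_top⟩
  obtain ⟨g, hg_meas, hg_mem, hg_lim⟩ := exists_tendsto_eLpNorm_of_cauchy
    (fun n => ⟨(hmeas n).aestronglyMeasurable, hbdd n⟩) fun δ hδ =>
      (hcauchy δ hδ).imp fun N hN p hp r hr => le_self_add.trans_lt (hN p hp r hr)
  have hconv : Tendsto (fun n => hNorm μ B ε₀ (h n - g)) atTop (𝓝 0) :=
    tendsto_hNorm_sub_of_cauchy B ε₀ hg_lim hcauchy
  refine ⟨g, hg_meas.measurable, hg_mem.2, ?_, hconv⟩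
  obtain ⟨N, hN⟩ := (hconv.eventually_lt_const ENNReal.zero_lt_top).exists
  calc hSemi μ B ε₀ g = hSemi μ B ε₀ (h N - (h N - g)) := by rw [sub_sub_cancel]
    _ ≤ hSemi μ B ε₀ (h N) + hSemi μ B ε₀ (h N - g) :=
        hSemi_sub_le B ε₀ (hbdd N).ne (le_self_add.trans_lt hN).ne (hBmeas _)
    _ < ⊤ := ENNReal.add_lt_top.2 ⟨hfin N, le_add_self.trans_lt hN⟩

/-- The space `H = {h ∈ L^∞ : |h|_{ε₀} < ∞}` of quasi-Hölder continuous
functions, with the norm `‖h‖_{ε₀} = |h|_∞ + |h|_{ε₀}`, is complete: every Cauchy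
sequence in `H` converges in `H` with respect to `‖·‖_{ε₀}`. -/
theorem stmt4 {α : Type*} [MeasurableSpace α] (μ : Measure α) [IsProbabilityMeasure μ]
    (B : ℝ → α → Set α) (ε₀ : ℝ) (hε₀ : ε₀ ∈ Set.Ioo (0 : ℝ) 1)
    (hBmeas : ∀ (h : α → ℝ) (ε : ℝ), Measurable fun x => osc μ h (B ε x))
    (h : ℕ → α → ℝ) (hmeas : ∀ n, Measurable (h n))
    (hbdd : ∀ n, eLpNorm (h n) ⊤ μ < ⊤)
    (hfin : ∀ n, hSemi μ B ε₀ (h n) < ⊤)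
    (hcauchy : ∀ δ : ℝ, 0 < δ → ∃ N : ℕ, ∀ p ≥ N, ∀ r ≥ N,
      hNorm μ B ε₀ (fun x => h p x - h r x) < ENNReal.ofReal δ) :
    ∃ g : α → ℝ, Measurable g ∧ eLpNorm g ⊤ μ < ⊤ ∧ hSemi μ B ε₀ g < ⊤ ∧
      Tendsto (fun n => hNorm μ B ε₀ (fun x => h n x - g x)) atTop (nhds 0) :=
  stmt4_general μ B ε₀ hBmeas h hmeas hbdd hfin hcauchy
end

section
/- Under the hypotheses of the Gibbs cylinder-decay lemma, there exist ε₀, s ∈ (0,1) and L ∈ ℕ such that for all ℓ ≥ L, every admissible word A of length ℓ, every x ∈ X with Ax admissible, and every ε ∈ (0, ε₀]: [A] ∩ σ^{−ℓ}(B(ε, x)) ⊆ B(s·ε, Ax), where B(ε, x) is the ball in the metric d₂(x,y) = inf{μ(C) : x,y ∈ C, C a cylinder}. -/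
open MeasureTheory
open scoped ENNReal

/-- A sequence is admissible for the transition matrix `A`. -/
def Adm {𝔸 : Type*} (A : 𝔸 → 𝔸 → Bool) (x : ℕ → 𝔸) : Prop :=
  ∀ n, A (x n) (x (n + 1)) = true

/-- The cylinder set of the word `w 0 … w (n-1)` inside the subshift. -/
def cylinder {𝔸 : Type*} (A : 𝔸 → 𝔸 → Bool) (w : ℕ → 𝔸) (n : ℕ) :
    Set {x : ℕ → 𝔸 // Adm A x} :=
  {x | ∀ i < n, x.1 i = w i}

/-- Birkhoff sum `S_n f = Σ_{k=0}^{n-1} f ∘ σ^k` along the shift on sequences. -/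
noncomputable def birk {𝔸 : Type*} (f : (ℕ → 𝔸) → ℝ) (n : ℕ) (x : ℕ → 𝔸) : ℝ :=
  ∑ k ∈ Finset.range n, f (fun i => x (i + k))

/-- `μ` is a Gibbs measure (with constant `C = 0`) with Gibbs constant `K` for `f`. -/
def IsGibbs {𝔸 : Type*} (A : 𝔸 → 𝔸 → Bool) [MeasurableSpace 𝔸]
    (μ : Measure {x : ℕ → 𝔸 // Adm A x}) (f : (ℕ → 𝔸) → ℝ) (K : ℝ) : Prop :=
  ∀ (n : ℕ) (w : ℕ → 𝔸) (x : {x : ℕ → 𝔸 // Adm A x}), x ∈ cylinder A w n →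
    ENNReal.ofReal (K⁻¹ * Real.exp (birk f n x.1)) ≤ μ (cylinder A w n) ∧
    μ (cylinder A w n) ≤ ENNReal.ofReal (K * Real.exp (birk f n x.1))

/-- Prepending a symbol to a sequence. -/
def extend {𝔸 : Type*} (a : 𝔸) (x : ℕ → 𝔸) : ℕ → 𝔸 := fun n => Nat.casesOn n a x

/-- `e^f` is a g-function: the sum of `e^{f(y)}` over preimages `y` of `x` is 1. -/
def IsGFunc {𝔸 : Type*} [Fintype 𝔸] (A : 𝔸 → 𝔸 → Bool) (f : (ℕ → 𝔸) → ℝ) : Prop :=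
  ∀ x : ℕ → 𝔸, Adm A x →
    ∑ a ∈ Finset.univ.filter (fun a => A a (x 0) = true), Real.exp (f (extend a x)) = 1

/-- `f` is Lipschitz with respect to the metric `d₁(x,y) = θ^{common prefix length}`. -/
def LipOnShift {𝔸 : Type*} (A : 𝔸 → 𝔸 → Bool) (f : (ℕ → 𝔸) → ℝ) : Prop :=
  ∃ C θ : ℝ, 0 < θ ∧ θ < 1 ∧ ∀ x y : ℕ → 𝔸, Adm A x → Adm A y →
    ∀ n : ℕ, (∀ i ≤ n, x i = y i) → |f x - f y| ≤ C * θ ^ n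

/-- `A` is irreducible and aperiodic (equivalently: primitive). -/
def Primitive {𝔸 : Type*} (A : 𝔸 → 𝔸 → Bool) : Prop :=
  ∃ N : ℕ, 0 < N ∧ ∀ i j : 𝔸, ∃ w : ℕ → 𝔸, w 0 = i ∧ w N = j ∧
    ∀ k < N, A (w k) (w (k + 1)) = true


/-- The measure-metric `d₂(x,y) = inf{μ(C) : x, y ∈ C, C a cylinder}` (in `ℝ≥0∞`). -/
noncomputable def d2 {𝔸 : Type*} (A : 𝔸 → 𝔸 → Bool) [MeasurableSpace 𝔸]
    (μ : Measure {x : ℕ → 𝔸 // Adm A x}) (x y : {x : ℕ → 𝔸 // Adm A x}) : ℝ≥0∞ :=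
  ⨅ (n : ℕ) (_ : ∀ i < n, x.1 i = y.1 i), μ (cylinder A x.1 n)

/-- The ball of radius `ε` around `x` in the metric `d₂`. -/
def ball {𝔸 : Type*} (A : 𝔸 → 𝔸 → Bool) [MeasurableSpace 𝔸]
    (μ : Measure {x : ℕ → 𝔸 // Adm A x}) (ε : ℝ) (x : {x : ℕ → 𝔸 // Adm A x}) :
    Set {x : ℕ → 𝔸 // Adm A x} :=
  {y | d2 A μ x y < ENNReal.ofReal ε}

/-- The left shift `σ` on the subshift. -/
def shiftX {𝔸 : Type*} (A : 𝔸 → 𝔸 → Bool) :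
    {x : ℕ → 𝔸 // Adm A x} → {x : ℕ → 𝔸 // Adm A x} :=
  fun x => ⟨fun n => x.1 (n + 1), fun n => x.2 (n + 1)⟩

/-- Concatenation `Ax` of a word `w` of length `ℓ` with a sequence `x`. -/
def concat {𝔸 : Type*} (w : ℕ → 𝔸) (ℓ : ℕ) (x : ℕ → 𝔸) : ℕ → 𝔸 :=
  fun i => if i < ℓ then w i else x (i - ℓ)

/-!
The g-function identity `∑_{a → x₀} e^{f(ax)} = 1` forces `f ≤ 0`, and wherever a symbol has a
second admissible predecessor `a`, it forces `e^{f} ≤ 1 - e^{f(a·)} ≤ 1 - e^{-M}`, `M` bounding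
`-f` (Lipschitz continuity). Primitivity and `|𝔸| ≥ 2` put such a symbol in every window of
length `N`, so `e^{S_ℓ f} ≤ ρ^{⌊ℓ/N⌋}` with `ρ < 1` uniformly. By the Gibbs property a cylinder
`[x₀ … x_{n-1}]` of measure `< ε` containing `σ^ℓ y` gives
`d₂(Ax, y) ≤ μ[A x₀ … x_{n-1}] ≤ K e^{S_ℓ f(y)} e^{S_n f(σ^ℓ y)} < K² ρ^{⌊ℓ/N⌋} ε`,
which is `≤ ε/2` once `ℓ` is large.
-/

namespace Adm

variable {𝔸 : Type*} {A : 𝔸 → 𝔸 → Bool}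

lemma shift {z : ℕ → 𝔸} (hz : Adm A z) (m : ℕ) : Adm A (fun i => z (i + m)) := fun n => by
  simpa only [Nat.add_right_comm n 1 m] using hz (n + m)

lemma extend {x : ℕ → 𝔸} {a : 𝔸} (ha : A a (x 0) = true) (hx : Adm A x) :
    Adm A (extend a x)
  | 0 => ha
  | n + 1 => hx n

end Adm

section Shift

variable {𝔸 : Type*}

lemma extend_apply_shift (z : ℕ → 𝔸) (k : ℕ) :
    extend (z k) (fun i => z (i + (k + 1))) = fun i => z (i + k) := by
  funext i
  cases i with
  | zero => exact congrArg z (Nat.zero_add k).symm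
  | succ n => exact congrArg z (by omega)

lemma birk_add (f : (ℕ → 𝔸) → ℝ) (m n : ℕ) (z : ℕ → 𝔸) :
    birk f (m + n) z = birk f m z + birk f n (fun i => z (i + m)) := by
  rw [birk, birk, birk, Finset.sum_range_add]
  congr 1
  exact Finset.sum_congr rfl fun k _ => congrArg f (funext fun i => congrArg z (by omega))

lemma shiftX_iterate_val {A : 𝔸 → 𝔸 → Bool} (y : {x : ℕ → 𝔸 // Adm A x}) (ℓ : ℕ) :
    ((shiftX A)^[ℓ] y).1 = fun i => y.1 (i + ℓ) := by
  induction ℓ with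
  | zero => rfl
  | succ m ih =>
    funext i
    rw [Function.iterate_succ_apply']
    change ((shiftX A)^[m] y).1 (i + 1) = _
    rw [ih]
    exact congrArg y.1 (by omega)

lemma mem_cylinder_concat {A : 𝔸 → 𝔸 → Bool} {w x : ℕ → 𝔸} {ℓ n : ℕ}
    {y : {x : ℕ → 𝔸 // Adm A x}} (hyw : ∀ i < ℓ, y.1 i = w i)
    (hyx : (shiftX A)^[ℓ] y ∈ cylinder A x n) :
    y ∈ cylinder A (concat w ℓ x) (ℓ + n) := by
  intro i hi
  by_cases h : i < ℓ
  · simp only [concat, if_pos h, hyw i h]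
  · have hx := hyx (i - ℓ) (by omega)
    rw [shiftX_iterate_val] at hx
    simp only [concat, if_neg h, ← hx, Nat.sub_add_cancel (not_lt.mp h)]

end Shift

namespace IsGFunc

variable {𝔸 : Type*} [Fintype 𝔸] {A : 𝔸 → 𝔸 → Bool} {f : (ℕ → 𝔸) → ℝ}

lemma sum_exp_le_one (hg : IsGFunc A f) {x : ℕ → 𝔸} (hx : Adm A x) (s : Finset 𝔸)
    (hs : ∀ a ∈ s, A a (x 0) = true) :
    ∑ a ∈ s, Real.exp (f (extend a x)) ≤ 1 := by
  rw [← hg x hx]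
  exact Finset.sum_le_sum_of_subset_of_nonneg (fun a ha => by simpa using hs a ha)
    (fun _ _ _ => (Real.exp_pos _).le)

lemma nonpos (hg : IsGFunc A f) {z : ℕ → 𝔸} (hz : Adm A z) : f z ≤ 0 := by
  have h := hg.sum_exp_le_one (hz.shift 1) {z 0} (by simpa using hz 0)
  rw [Finset.sum_singleton, extend_apply_shift z 0] at h
  simpa using h

lemma exp_le_one_sub (hg : IsGFunc A f) {z : ℕ → 𝔸} (hz : Adm A z) {a : 𝔸} (ha : a ≠ z 0)
    (haz : A a (z 1) = true) :
    Real.exp (f z) ≤ 1 - Real.exp (f (extend a (fun i => z (i + 1)))) := by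
  classical
  have h := hg.sum_exp_le_one (hz.shift 1) {a, z 0} (by simpa [haz] using hz 0)
  rw [Finset.sum_pair ha, extend_apply_shift z 0] at h
  simp only [Nat.add_zero] at h
  linarith

lemma birk_le_apply (hg : IsGFunc A f) {z : ℕ → 𝔸} (hz : Adm A z) {N k : ℕ} (hk : k < N) :
    birk f N z ≤ f (fun i => z (i + k)) := by
  have hmem : k ∈ Finset.range N := Finset.mem_range.mpr hk
  rw [birk, ← Finset.sum_erase_add _ _ hmem]
  have hrest : ∑ j ∈ (Finset.range N).erase k, f (fun i => z (i + j)) ≤ 0 :=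
    Finset.sum_nonpos fun j _ => hg.nonpos (hz.shift j)
  linarith

end IsGFunc

section Decay

variable {𝔸 : Type*} {A : 𝔸 → 𝔸 → Bool} {f : (ℕ → 𝔸) → ℝ}

/-- Tracing a path from a symbol `≠ z 0` to `z N` backwards along `z` would end in `z 0`. -/
lemma Primitive.exists_second_pred [Nontrivial 𝔸] (hp : Primitive A) :
    ∃ N, 0 < N ∧ ∀ z : ℕ → 𝔸, Adm A z →
      ∃ k < N, ∃ a, a ≠ z k ∧ A a (z (k + 1)) = true := by
  obtain ⟨N, hN, hpath⟩ := hp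
  refine ⟨N, hN, fun z _ => ?_⟩
  by_contra! hcon
  obtain ⟨i, hi⟩ := exists_ne (z 0)
  obtain ⟨w, hw0, hwN, hstep⟩ := hpath i (z N)
  have hwz : ∀ j ≤ N, w j = z j := fun j hj =>
    Nat.decreasingInduction (motive := fun j _ => w j = z j)
      (fun k hk ih => by_contra fun hne => hcon k hk _ hne (ih ▸ hstep k hk)) hwN hj
  exact hi (hw0 ▸ hwz 0 (Nat.zero_le N))

lemma LipOnShift.exists_neg_le [Fintype 𝔸] (hlip : LipOnShift A f) :
    ∃ M, 0 ≤ M ∧ ∀ z : ℕ → 𝔸, Adm A z → -M ≤ f z := by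
  obtain ⟨C, θ, -, -, hC⟩ := hlip
  have hstart (a : 𝔸) : ∃ p : ℕ → 𝔸, ∀ q, Adm A q → q 0 = a → Adm A p ∧ p 0 = a :=
    (em (∃ q, Adm A q ∧ q 0 = a)).elim (fun ⟨q, hq⟩ => ⟨q, fun _ _ _ => hq⟩)
      fun h => ⟨fun _ => a, fun q hq hq0 => (h ⟨q, hq, hq0⟩).elim⟩
  choose P hP using hstart
  refine ⟨|C| + ∑ a, |f (P a)|, by positivity, fun z hz => ?_⟩
  obtain ⟨hPadm, hP0⟩ := hP (z 0) z hz rfl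
  have hclose : |f z - f (P (z 0))| ≤ C * θ ^ 0 :=
    hC z _ hz hPadm 0 fun i hi => by rw [Nat.le_zero.mp hi, hP0]
  have hterm : |f (P (z 0))| ≤ ∑ a, |f (P a)| :=
    Finset.single_le_sum (fun a _ => abs_nonneg (f (P a))) (Finset.mem_univ (z 0))
  rw [pow_zero, mul_one] at hclose
  linarith [abs_le.mp hclose, neg_abs_le (f (P (z 0))), le_abs_self C]

lemma exp_birk_le_pow (hf : ∀ z, Adm A z → f z ≤ 0) {N : ℕ} (hN : 0 < N) {ρ : ℝ}
    (hwin : ∀ z, Adm A z → Real.exp (birk f N z) ≤ ρ) (ℓ : ℕ) {z : ℕ → 𝔸} (hz : Adm A z) :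
    Real.exp (birk f ℓ z) ≤ ρ ^ (ℓ / N) := by
  induction ℓ using Nat.strong_induction_on generalizing z with
  | _ ℓ ih =>
    rcases lt_or_ge ℓ N with h | h
    · rw [Nat.div_eq_of_lt h, pow_zero, Real.exp_le_one_iff]
      exact Finset.sum_nonpos fun j _ => hf _ (hz.shift j)
    · have hρ : 0 ≤ ρ := (Real.exp_pos _).le.trans (hwin z hz)
      obtain ⟨m, rfl⟩ := Nat.exists_eq_add_of_le h
      rw [birk_add, Real.exp_add, Nat.add_div_left m hN, pow_succ']
      exact mul_le_mul (hwin z hz) (ih m (by omega) (hz.shift N)) (Real.exp_pos _).le hρ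

lemma IsGFunc.exp_birk_le_one_sub [Fintype 𝔸] (hg : IsGFunc A f) {M : ℝ}
    (hM : ∀ z, Adm A z → -M ≤ f z) {z : ℕ → 𝔸} (hz : Adm A z) {N k : ℕ} (hk : k < N)
    {a : 𝔸} (ha : a ≠ z k) (haz : A a (z (k + 1)) = true) :
    Real.exp (birk f N z) ≤ 1 - Real.exp (-M) := by
  have haz' : A a (z (0 + 1 + k)) = true := by rwa [Nat.zero_add, Nat.add_comm]
  calc Real.exp (birk f N z) ≤ Real.exp (f (fun i => z (i + k))) :=
        Real.exp_le_exp.mpr (hg.birk_le_apply hz hk)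
    _ ≤ 1 - Real.exp (f (extend a (fun i => z (i + 1 + k)))) :=
        hg.exp_le_one_sub (hz.shift k) (by rwa [Nat.zero_add]) haz'
    _ ≤ 1 - Real.exp (-M) := by
        gcongr
        exact hM _ (((hz.shift k).shift 1).extend haz')

lemma IsGFunc.exists_exp_birk_le [Fintype 𝔸] [Nontrivial 𝔸] (hg : IsGFunc A f)
    (hp : Primitive A) (hlip : LipOnShift A f) {δ : ℝ} (hδ : 0 < δ) :
    ∃ L, ∀ ℓ ≥ L, ∀ z, Adm A z → Real.exp (birk f ℓ z) ≤ δ := by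
  obtain ⟨N, hN, hpred⟩ := hp.exists_second_pred
  obtain ⟨M, hM0, hM⟩ := hlip.exists_neg_le
  have hρ0 : 0 ≤ 1 - Real.exp (-M) := sub_nonneg.mpr (Real.exp_le_one_iff.mpr (by linarith))
  have hρ1 : 1 - Real.exp (-M) < 1 := sub_lt_self _ (Real.exp_pos _)
  have hwin (z : ℕ → 𝔸) (hz : Adm A z) : Real.exp (birk f N z) ≤ 1 - Real.exp (-M) := by
    obtain ⟨k, hk, a, ha, haz⟩ := hpred z hz
    exact hg.exp_birk_le_one_sub hM hz hk ha haz
  obtain ⟨m, hm⟩ := exists_pow_lt_of_lt_one hδ hρ1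
  refine ⟨N * m, fun ℓ hℓ z hz => ?_⟩
  have hmℓ : m ≤ ℓ / N := (Nat.le_div_iff_mul_le hN).mpr (by rwa [Nat.mul_comm])
  calc Real.exp (birk f ℓ z) ≤ (1 - Real.exp (-M)) ^ (ℓ / N) :=
        exp_birk_le_pow (fun _ => hg.nonpos) hN hwin ℓ hz
    _ ≤ (1 - Real.exp (-M)) ^ m := pow_le_pow_of_le_one hρ0 hρ1.le hmℓ
    _ ≤ δ := hm.le

end Decay

namespace IsGibbs

variable {𝔸 : Type*} [MeasurableSpace 𝔸] {A : 𝔸 → 𝔸 → Bool}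
  {μ : Measure {x : ℕ → 𝔸 // Adm A x}} {f : (ℕ → 𝔸) → ℝ} {K : ℝ}

lemma d2_le (hG : IsGibbs A μ f K) {x y : {x : ℕ → 𝔸 // Adm A x}} {n : ℕ}
    (hy : y ∈ cylinder A x.1 n) :
    d2 A μ x y ≤ ENNReal.ofReal (K * Real.exp (birk f n y.1)) :=
  (iInf₂_le n fun i hi => (hy i hi).symm).trans (hG n x.1 y hy).2

lemma exists_exp_birk_lt_of_d2_lt (hG : IsGibbs A μ f K) (hK : 0 < K)
    {x y : {x : ℕ → 𝔸 // Adm A x}} {ε : ℝ} (hxy : d2 A μ x y < ENNReal.ofReal ε) :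
    ∃ n, y ∈ cylinder A x.1 n ∧ Real.exp (birk f n y.1) < K * ε := by
  obtain ⟨n, hxy⟩ := iInf_lt_iff.mp hxy
  obtain ⟨hn, hlt⟩ := iInf_lt_iff.mp hxy
  have hy : y ∈ cylinder A x.1 n := fun i hi => (hn i hi).symm
  have hKε := (ENNReal.ofReal_lt_ofReal_iff'.mp ((hG n x.1 y hy).1.trans_lt hlt)).1
  refine ⟨n, hy, ?_⟩
  rwa [inv_mul_lt_iff₀ hK] at hKε

end IsGibbs

theorem stmt8_general {𝔸 : Type*} [Fintype 𝔸] [MeasurableSpace 𝔸]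
    (A : 𝔸 → 𝔸 → Bool) (hcard : 2 ≤ Fintype.card 𝔸) (hprim : Primitive A)
    (f : (ℕ → 𝔸) → ℝ) (hlip : LipOnShift A f) (hgfunc : IsGFunc A f)
    (μ : Measure {x : ℕ → 𝔸 // Adm A x})
    (K : ℝ) (hK : 0 < K) (hGibbs : IsGibbs A μ f K) :
    ∃ (ε₀ s : ℝ) (L : ℕ), ε₀ ∈ Set.Ioo (0 : ℝ) 1 ∧ s ∈ Set.Ioo (0 : ℝ) 1 ∧
      ∀ ℓ : ℕ, L ≤ ℓ → ∀ (w : ℕ → 𝔸) (x : {x : ℕ → 𝔸 // Adm A x})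
        (hadm : Adm A (concat w ℓ x.1)), ∀ ε : ℝ, 0 < ε → ε ≤ ε₀ →
        ∀ y : {x : ℕ → 𝔸 // Adm A x}, (∀ i < ℓ, y.1 i = w i) →
          (shiftX A)^[ℓ] y ∈ ball A μ ε x →
          y ∈ ball A μ (s * ε) ⟨concat w ℓ x.1, hadm⟩ := by
  have : Nontrivial 𝔸 := Fintype.one_lt_card_iff_nontrivial.mp hcard
  obtain ⟨L, hL⟩ := hgfunc.exists_exp_birk_le hprim hlip (δ := (2 * K ^ 2)⁻¹) (by positivity)
  refine ⟨1 / 2, 1 / 2, L, ⟨by norm_num, by norm_num⟩, ⟨by norm_num, by norm_num⟩, ?_⟩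
  intro ℓ hℓ w x hadm ε hε _ y hyw hball
  obtain ⟨n, hn, hexp⟩ := hGibbs.exists_exp_birk_lt_of_d2_lt hK hball
  refine (hGibbs.d2_le (mem_cylinder_concat hyw hn)).trans_lt
    ((ENNReal.ofReal_lt_ofReal_iff (by positivity)).mpr ?_)
  rw [birk_add, ← shiftX_iterate_val, Real.exp_add]
  calc K * (Real.exp (birk f ℓ y.1) * Real.exp (birk f n ((shiftX A)^[ℓ] y).1))
      ≤ K * ((2 * K ^ 2)⁻¹ * Real.exp (birk f n ((shiftX A)^[ℓ] y).1)) := by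
        gcongr
        exact hL ℓ hℓ y.1 y.2
    _ < K * ((2 * K ^ 2)⁻¹ * (K * ε)) := by gcongr
    _ = 1 / 2 * ε := by field_simp

/-- There exist `ε₀, s ∈ (0,1)` and `L ∈ ℕ` such that for all `ℓ ≥ L`, every
admissible word `A` of length `ℓ`, every `x` with `Ax` admissible and `ε ∈ (0, ε₀]`:
`[A] ∩ σ^{-ℓ}(B(ε,x)) ⊆ B(s·ε, Ax)`, where balls are in the measure-metric `d₂`. -/
theorem stmt8 {𝔸 : Type*} [Fintype 𝔸] [MeasurableSpace 𝔸]
    (A : 𝔸 → 𝔸 → Bool) (hcard : 2 ≤ Fintype.card 𝔸) (hprim : Primitive A)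
    (f : (ℕ → 𝔸) → ℝ) (hlip : LipOnShift A f) (hgfunc : IsGFunc A f)
    (μ : Measure {x : ℕ → 𝔸 // Adm A x}) [IsProbabilityMeasure μ]
    (K : ℝ) (hK : 0 < K) (hGibbs : IsGibbs A μ f K) :
    ∃ (ε₀ s : ℝ) (L : ℕ), ε₀ ∈ Set.Ioo (0 : ℝ) 1 ∧ s ∈ Set.Ioo (0 : ℝ) 1 ∧
      ∀ ℓ : ℕ, L ≤ ℓ → ∀ (w : ℕ → 𝔸) (x : {x : ℕ → 𝔸 // Adm A x})
        (hadm : Adm A (concat w ℓ x.1)), ∀ ε : ℝ, 0 < ε → ε ≤ ε₀ →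
        ∀ y : {x : ℕ → 𝔸 // Adm A x}, (∀ i < ℓ, y.1 i = w i) →
          (shiftX A)^[ℓ] y ∈ ball A μ ε x →
          y ∈ ball A μ (s * ε) ⟨concat w ℓ x.1, hadm⟩ :=
  stmt8_general A hcard hprim f hlip hgfunc μ K hK hGibbs
end

section
/- Let T : Ω → Ω preserve a probability measure μ and let χ : Ω → ℝ_{≥0} be measurable. Suppose almost surely that eventually (in n) the number of indices i ∈ {0,…,n−1} with χ(T^i ω) > f_n lies within γ_n of n·μ(χ > f_n), i.e. |Σ_{i=1}^n 1_{χ>f_n}∘T^{i−1} − n·μ(χ>f_n)| < γ_n. Then almost surely, eventually, the trimmed sum with b_n = ⌈n·μ(χ>f_n) + γ_n⌉ largest terms removed satisfies S_n^{b_n}χ ≤ T_n^{f_n}χ, where T_n^{f_n}χ = Σ_{i=1}^n (χ·1_{χ ≤ f_n})∘T^{i−1} and S_n^{b}χ denotes the Birkhoff sum of the first n terms after removing the b largest. -/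
/-!
The statement is pathwise. If at most `b` of the first `n` terms exceed `c`, then at least
`n - b` of them are `≤ c`; these form an admissible index set in the minimum defining the
trimmed sum, and by nonnegativity of `χ` their sum is at most the truncated sum. The counting
hypothesis gives exactly this with `c = f n` and `b = ⌈n μ(χ > f n) + γ n⌉`.
-/

open MeasureTheory Filter

/-- The trimmed Birkhoff sum `S_n^b χ`: the sum of the `n − b` smallest among the first
`n` terms `χ(ω), χ(Tω), …, χ(T^{n−1}ω)`, i.e. the Birkhoff sum with the `b` largest
summands removed. -/
noncomputable def trimmedSum {Ω : Type*} (T : Ω → Ω) (χ : Ω → ℝ) (n b : ℕ) (ω : Ω) : ℝ :=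
  ((Finset.range n).powersetCard (n - b)).inf'
    (by
      rw [Finset.powersetCard_nonempty]
      simp)
    (fun s => ∑ i ∈ s, χ (T^[i] ω))

open Finset

section TrimmedSum

variable {Ω : Type*} (T : Ω → Ω) {χ : Ω → ℝ}

theorem trimmedSum_le_sum_of_subset (hχ : ∀ x, 0 ≤ χ x) {n b : ℕ} {s : Finset ℕ}
    (hs : s ⊆ range n) (hcard : n - b ≤ #s) (ω : Ω) :
    trimmedSum T χ n b ω ≤ ∑ i ∈ s, χ (T^[i] ω) := by
  obtain ⟨t, hts, htc⟩ := exists_subset_card_eq hcard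
  calc trimmedSum T χ n b ω ≤ ∑ i ∈ t, χ (T^[i] ω) :=
        inf'_le _ (mem_powersetCard.mpr ⟨hts.trans hs, htc⟩)
    _ ≤ ∑ i ∈ s, χ (T^[i] ω) := sum_le_sum_of_subset_of_nonneg hts fun _ _ _ => hχ _

theorem trimmedSum_le_sum_indicator (hχ : ∀ x, 0 ≤ χ x) {n b : ℕ} {c : ℝ} {ω : Ω}
    (hb : #{i ∈ range n | c < χ (T^[i] ω)} ≤ b) :
    trimmedSum T χ n b ω ≤ ∑ i ∈ range n, {x | χ x ≤ c}.indicator χ (T^[i] ω) := by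
  rw [sum_indicator_eq_sum_filter]
  refine trimmedSum_le_sum_of_subset T hχ (filter_subset _ _) ?_ ω
  have hsplit := card_filter_add_card_filter_not (s := range n) fun i => c < χ (T^[i] ω)
  simp only [not_lt, card_range] at hsplit
  simp only [Set.mem_ofPred_eq]
  omega

end TrimmedSum

theorem stmt14_general {Ω : Type*} [MeasurableSpace Ω] (μ : Measure Ω)
    (T : Ω → Ω)
    (χ : Ω → ℝ) (hχ0 : ∀ ω, 0 ≤ χ ω)
    (f γ : ℕ → ℝ)
    (hcount : ∀ᵐ ω ∂μ, ∀ᶠ n in atTop,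
      |(((Finset.range n).filter fun i => f n < χ (T^[i] ω)).card : ℝ)
          - n * (μ {x | f n < χ x}).toReal| < γ n) :
    ∀ᵐ ω ∂μ, ∀ᶠ n in atTop,
      trimmedSum T χ n ⌈n * (μ {x | f n < χ x}).toReal + γ n⌉₊ ω
        ≤ ∑ i ∈ Finset.range n, Set.indicator {x | χ x ≤ f n} χ (T^[i] ω) := by
  filter_upwards [hcount] with ω hω
  filter_upwards [hω] with n hn
  refine trimmedSum_le_sum_indicator T hχ0 ((Nat.cast_le (α := ℝ)).mp ?_)
  calc _ ≤ n * (μ {x | f n < χ x}).toReal + γ n := by linarith [(abs_lt.mp hn).2]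
    _ ≤ _ := Nat.le_ceil _

/-- If a.s. eventually the number of indices `i < n` with
`χ(T^i ω) > f_n` lies within `γ_n` of `n·μ(χ > f_n)`, then a.s. eventually the trimmed
sum with `b_n = ⌈n·μ(χ > f_n) + γ_n⌉` largest terms removed is dominated by the
truncated sum: `S_n^{b_n} χ ≤ T_n^{f_n} χ`. -/
theorem stmt14 {Ω : Type*} [MeasurableSpace Ω] (μ : Measure Ω) [IsProbabilityMeasure μ]
    (T : Ω → Ω) (hT : MeasurePreserving T μ μ)
    (χ : Ω → ℝ) (hχm : Measurable χ) (hχ0 : ∀ ω, 0 ≤ χ ω)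
    (f γ : ℕ → ℝ) (hf : ∀ n, 0 < f n) (hγ : ∀ n, 0 < γ n)
    (hcount : ∀ᵐ ω ∂μ, ∀ᶠ n in atTop,
      |(((Finset.range n).filter fun i => f n < χ (T^[i] ω)).card : ℝ)
          - n * (μ {x | f n < χ x}).toReal| < γ n) :
    ∀ᵐ ω ∂μ, ∀ᶠ n in atTop,
      trimmedSum T χ n ⌈n * (μ {x | f n < χ x}).toReal + γ n⌉₊ ω
        ≤ ∑ i ∈ Finset.range n, Set.indicator {x | χ x ≤ f n} χ (T^[i] ω) :=
  stmt14_general μ T χ hχ0 f γ hcount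
end

section
/- Let (Ω, 𝒜, μ, T) be a measure-preserving system and χ : Ω → ℝ_{≥0}. Suppose there exist K, E > 0 such that for every ε ∈ (0,E), r > 0 with μ(χ ≤ r) > 0, and n large: μ(max_{i≤n} |T_i^r χ − ∫T_i^r χ dμ| ≥ ε·∫T_n^r χ dμ) ≤ K·exp(−ε·(∫T_n^r χ dμ)/r), where T_i^r χ = Σ_{k=1}^i (χ·1_{χ≤r})∘T^{k−1}. If (f_n) satisfies f_n → ∞ and n·∫χ·1_{χ≤f_n}dμ/f_n ≥ n^{1/2} along the subsequence where f_n ≤ n^{1/2}, and ∫χ·1_{χ≤n^{1/2}}dμ ≥ 1 for large n, then for ḡ_n := min{f_n, n^{1/2}} and every ε ∈ (0,E), Σ_n μ(|T_n^{ḡ_n}χ − ∫T_n^{ḡ_n}χ dμ| ≥ ε ∫T_n^{ḡ_n}χ dμ) < ∞, and hence by Borel–Cantelli, μ-a.s. |T_n^{ḡ_n}χ − ∫T_n^{ḡ_n}χ dμ| < ε ∫T_n^{ḡ_n}χ dμ eventually. -/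
open MeasureTheory Filter

/-- The truncated Birkhoff sum `T_i^r χ = Σ_{k=1}^i (χ·1_{χ ≤ r})∘T^{k−1}`. -/
noncomputable def truncSum {Ω : Type*} (T : Ω → Ω) (χ : Ω → ℝ) (r : ℝ) (i : ℕ)
    (ω : Ω) : ℝ :=
  ∑ k ∈ Finset.range i, Set.indicator {y | χ y ≤ r} χ (T^[k] ω)

/-!
Write `J r = ∫ χ·1_{χ ≤ r} dμ`. By invariance of `μ`, `∫ T_n^r χ dμ = n·J r`, so with `r = ḡ_n`
the exponent in the concentration bound is `ε·n·J(ḡ_n)/ḡ_n`. When `ḡ_n = f_n` this is at least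
`ε√n` by assumption, and when `ḡ_n = √n` it equals `ε√n·J(√n) ≥ ε√n`. The deviation
probabilities are therefore eventually at most `K·exp(−ε√n)`, which is summable, and
Borel–Cantelli gives the almost sure statement.
-/

theorem MeasureTheory.MeasurePreserving.integral_comp_of_aestronglyMeasurable
    {α β E : Type*} [MeasurableSpace α] [MeasurableSpace β] [NormedAddCommGroup E]
    [NormedSpace ℝ E] {μ : Measure α} {ν : Measure β} {f : α → β}
    (hf : MeasurePreserving f μ ν) {g : β → E} (hg : AEStronglyMeasurable g ν) :
    ∫ x, g (f x) ∂μ = ∫ y, g y ∂ν := by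
  rw [← hf.map_eq] at hg ⊢
  exact (integral_map hf.measurable.aemeasurable hg).symm

lemma summable_exp_neg_mul_sqrt {ε : ℝ} (hε : 0 < ε) :
    Summable fun n : ℕ => Real.exp (-ε * √n) := by
  refine .of_norm_bounded_eventually_nat
    ((Real.summable_one_div_nat_pow.mpr one_lt_two).mul_left (24 / ε ^ 4)) ?_
  filter_upwards [eventually_gt_atTop 0] with n hn
  have hn' : (0 : ℝ) < n := by exact_mod_cast hn
  have hx : 0 ≤ ε * √n := by positivity
  have h4 : (ε * √n) ^ 4 = ε ^ 4 * n ^ 2 := by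
    rw [mul_pow, show 4 = 2 * 2 from rfl, pow_mul √_, Real.sq_sqrt hn'.le]
  rw [Real.norm_of_nonneg (Real.exp_pos _).le, neg_mul, Real.exp_neg]
  calc (Real.exp (ε * √n))⁻¹ ≤ ((ε * √n) ^ 4 / Nat.factorial 4)⁻¹ :=
        inv_anti₀ (by positivity) (Real.pow_div_factorial_le_exp _ hx 4)
    _ = 24 / ε ^ 4 * (1 / n ^ 2) := by
        rw [h4]; simp only [Nat.factorial]; field_simp; norm_num

lemma sqrt_le_mul_div_min {J : ℝ → ℝ} {x a : ℝ} (hx : 0 ≤ x)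
    (ha : a ≤ √x → √x ≤ x * J a / a) (hJ : 1 ≤ J √x) :
    √x ≤ x * J (min a √x) / min a √x := by
  rcases le_total a √x with h | h
  · rw [min_eq_left h]
    exact ha h
  · rw [min_eq_right h]
    calc √x = x / √x := Real.div_sqrt.symm
      _ ≤ x * J √x / √x := by gcongr; exact le_mul_of_one_le_right hx hJ

section

variable {Ω : Type*} [MeasurableSpace Ω] {μ : Measure Ω}

lemma measure_pos_of_integral_indicator_pos {s : Set Ω} {g : Ω → ℝ}
    (h : 0 < ∫ x, s.indicator g x ∂μ) : 0 < μ s := by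
  refine pos_iff_ne_zero.mpr fun hs => h.ne' ?_
  rw [integral_congr_ae (indicator_meas_zero hs)]
  exact integral_zero Ω ℝ

lemma ae_eventually_notMem_of_summable_toReal [IsFiniteMeasure μ] {s : ℕ → Set Ω}
    (hs : Summable fun n => (μ (s n)).toReal) : ∀ᵐ ω ∂μ, ∀ᶠ n in atTop, ω ∉ s n := by
  refine ae_eventually_notMem ?_
  simpa [ENNReal.ofReal_toReal, measure_ne_top] using hs.tsum_ofReal_lt_top.ne

lemma summable_toReal_and_ae_eventually_notMem_of_le [IsFiniteMeasure μ] {s : ℕ → Set Ω}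
    {b : ℕ → ℝ} (hb : Summable b) (hb0 : ∀ n, 0 ≤ b n)
    (hsb : ∀ᶠ n in atTop, μ (s n) ≤ ENNReal.ofReal (b n)) :
    Summable (fun n => (μ (s n)).toReal) ∧ ∀ᵐ ω ∂μ, ∀ᶠ n in atTop, ω ∉ s n := by
  have hs : Summable fun n => (μ (s n)).toReal := by
    refine .of_norm_bounded_eventually_nat hb ?_
    filter_upwards [hsb] with n hn
    rw [Real.norm_of_nonneg ENNReal.toReal_nonneg]
    exact ENNReal.toReal_le_of_le_ofReal (hb0 n) hn
  exact ⟨hs, ae_eventually_notMem_of_summable_toReal hs⟩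

variable [IsFiniteMeasure μ] {T : Ω → Ω} {χ : Ω → ℝ}

lemma integrable_indicator_le (hχm : Measurable χ) (hχ0 : ∀ ω, 0 ≤ χ ω) (r : ℝ) :
    Integrable ({y | χ y ≤ r}.indicator χ) μ := by
  refine .of_bound (hχm.indicator (measurableSet_le hχm measurable_const)).aestronglyMeasurable
    (max r 0) (ae_of_all _ fun x => ?_)
  rw [Real.norm_eq_abs, abs_of_nonneg (Set.indicator_nonneg (fun y _ => hχ0 y) x),
    Set.indicator_apply]
  split_ifs with h
  · exact le_max_of_le_left h
  · exact le_max_right r 0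

lemma integral_truncSum (hT : MeasurePreserving T μ μ) (hχm : Measurable χ)
    (hχ0 : ∀ ω, 0 ≤ χ ω) (r : ℝ) (n : ℕ) :
    ∫ x, truncSum T χ r n x ∂μ = n * ∫ x, {y | χ y ≤ r}.indicator χ x ∂μ := by
  have hg := integrable_indicator_le (μ := μ) hχm hχ0 r
  have hcomp (k : ℕ) : Integrable (fun x => {y | χ y ≤ r}.indicator χ (T^[k] x)) μ :=
    (hT.iterate k).integrable_comp_of_integrable hg
  unfold truncSum
  rw [integral_finsetSum _ fun k _ => hcomp k]
  simp [(hT.iterate _).integral_comp_of_aestronglyMeasurable hg.aestronglyMeasurable]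

lemma measure_deviation_le_exp_sqrt (hT : MeasurePreserving T μ μ) (hχm : Measurable χ)
    (hχ0 : ∀ ω, 0 ≤ χ ω) {K ε r : ℝ} (hK : 0 ≤ K) (hε : 0 ≤ ε) {n : ℕ}
    (hconc : μ {ω | ∃ i ≤ n, ε * ∫ x, truncSum T χ r n x ∂μ
        ≤ |truncSum T χ r i ω - ∫ x, truncSum T χ r i x ∂μ|}
      ≤ ENNReal.ofReal (K * Real.exp (-ε * (∫ x, truncSum T χ r n x ∂μ) / r)))
    (hlow : √n ≤ n * (∫ x, {y | χ y ≤ r}.indicator χ x ∂μ) / r) :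
    μ {ω | ε * ∫ x, truncSum T χ r n x ∂μ
        ≤ |truncSum T χ r n ω - ∫ x, truncSum T χ r n x ∂μ|}
      ≤ ENNReal.ofReal (K * Real.exp (-ε * √n)) := by
  refine (measure_mono ?_).trans (hconc.trans ?_)
  · exact fun ω hω => ⟨n, le_rfl, hω⟩
  rw [integral_truncSum hT hχm hχ0, mul_div_assoc, neg_mul, neg_mul]
  gcongr

end

theorem stmt19_general {Ω : Type*} [MeasurableSpace Ω] (μ : Measure Ω) [IsProbabilityMeasure μ]
    (T : Ω → Ω) (hT : MeasurePreserving T μ μ)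
    (χ : Ω → ℝ) (hχm : Measurable χ) (hχ0 : ∀ ω, 0 ≤ χ ω)
    (K E : ℝ) (hK : 0 < K) (N : ℕ)
    (hconc : ∀ ε ∈ Set.Ioo (0 : ℝ) E, ∀ r : ℝ, 0 < r → 0 < μ {x | χ x ≤ r} →
      ∀ n : ℕ, N ≤ n →
      μ {ω | ∃ i ≤ n, ε * ∫ x, truncSum T χ r n x ∂μ
              ≤ |truncSum T χ r i ω - ∫ x, truncSum T χ r i x ∂μ|}
        ≤ ENNReal.ofReal
            (K * Real.exp (-ε * (∫ x, truncSum T χ r n x ∂μ) / r)))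
    (f : ℕ → ℝ) (hfpos : ∀ n, 0 < f n)
    (hflow : ∀ᶠ n : ℕ in atTop, f n ≤ Real.sqrt n →
      Real.sqrt n ≤ n * (∫ x, Set.indicator {y | χ y ≤ f n} χ x ∂μ) / f n)
    (hint1 : ∀ᶠ n : ℕ in atTop,
      1 ≤ ∫ x, Set.indicator {y | χ y ≤ Real.sqrt n} χ x ∂μ) :
    ∀ ε ∈ Set.Ioo (0 : ℝ) E,
      Summable (fun n : ℕ =>
        (μ {ω | ε * ∫ x, truncSum T χ (min (f n) (Real.sqrt n)) n x ∂μ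
            ≤ |truncSum T χ (min (f n) (Real.sqrt n)) n ω
                - ∫ x, truncSum T χ (min (f n) (Real.sqrt n)) n x ∂μ|}).toReal) ∧
      ∀ᵐ ω ∂μ, ∀ᶠ n : ℕ in atTop,
        |truncSum T χ (min (f n) (Real.sqrt n)) n ω
            - ∫ x, truncSum T χ (min (f n) (Real.sqrt n)) n x ∂μ|
          < ε * ∫ x, truncSum T χ (min (f n) (Real.sqrt n)) n x ∂μ := by
  intro ε hε
  refine (summable_toReal_and_ae_eventually_notMem_of_le
      ((summable_exp_neg_mul_sqrt hε.1).mul_left K) (fun n => by positivity) ?_).imp_right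
    fun h => h.mono fun ω hω => hω.mono fun n hn => not_le.mp hn
  filter_upwards [hflow, hint1, eventually_gt_atTop 0, eventually_ge_atTop N]
    with n hfl hi1 hn hnN
  set r := min (f n) √n
  have hsqrt : 0 < √(n : ℝ) := Real.sqrt_pos.mpr (by exact_mod_cast hn)
  have hr : 0 < r := lt_min (hfpos n) hsqrt
  have hlow := sqrt_le_mul_div_min (J := fun t => ∫ x, {y | χ y ≤ t}.indicator χ x ∂μ)
    n.cast_nonneg hfl hi1
  have hJ : 0 < ∫ x, {y | χ y ≤ r}.indicator χ x ∂μ :=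
    pos_of_mul_pos_right ((div_pos_iff_of_pos_right hr).mp (hsqrt.trans_le hlow)) n.cast_nonneg
  have hμ := measure_pos_of_integral_indicator_pos hJ
  exact measure_deviation_le_exp_sqrt hT hχm hχ0 hK.le hε.1.le (hconc ε hε r hr hμ n hnN) hlow

/-- Given the exponential concentration bound for truncated Birkhoff sums,
if `f_n → ∞`, `n·∫χ1_{χ≤f_n}/f_n ≥ √n` whenever `f_n ≤ √n`, and `∫χ1_{χ≤√n} ≥ 1` for
large `n`, then for `ḡ_n = min{f_n, √n}` and every `ε ∈ (0,E)` the deviation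
probabilities are summable, and hence a.s. eventually
`|T_n^{ḡ_n}χ − ∫T_n^{ḡ_n}χ dμ| < ε·∫T_n^{ḡ_n}χ dμ`. -/
theorem stmt19 {Ω : Type*} [MeasurableSpace Ω] (μ : Measure Ω) [IsProbabilityMeasure μ]
    (T : Ω → Ω) (hT : MeasurePreserving T μ μ)
    (χ : Ω → ℝ) (hχm : Measurable χ) (hχ0 : ∀ ω, 0 ≤ χ ω)
    (K E : ℝ) (hK : 0 < K) (hE : 0 < E) (N : ℕ)
    (hconc : ∀ ε ∈ Set.Ioo (0 : ℝ) E, ∀ r : ℝ, 0 < r → 0 < μ {x | χ x ≤ r} →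
      ∀ n : ℕ, N ≤ n →
      μ {ω | ∃ i ≤ n, ε * ∫ x, truncSum T χ r n x ∂μ
              ≤ |truncSum T χ r i ω - ∫ x, truncSum T χ r i x ∂μ|}
        ≤ ENNReal.ofReal
            (K * Real.exp (-ε * (∫ x, truncSum T χ r n x ∂μ) / r)))
    (f : ℕ → ℝ) (hfpos : ∀ n, 0 < f n) (hftop : Tendsto f atTop atTop)
    (hflow : ∀ᶠ n : ℕ in atTop, f n ≤ Real.sqrt n →
      Real.sqrt n ≤ n * (∫ x, Set.indicator {y | χ y ≤ f n} χ x ∂μ) / f n)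
    (hint1 : ∀ᶠ n : ℕ in atTop,
      1 ≤ ∫ x, Set.indicator {y | χ y ≤ Real.sqrt n} χ x ∂μ) :
    ∀ ε ∈ Set.Ioo (0 : ℝ) E,
      Summable (fun n : ℕ =>
        (μ {ω | ε * ∫ x, truncSum T χ (min (f n) (Real.sqrt n)) n x ∂μ
            ≤ |truncSum T χ (min (f n) (Real.sqrt n)) n ω
                - ∫ x, truncSum T χ (min (f n) (Real.sqrt n)) n x ∂μ|}).toReal) ∧
      ∀ᵐ ω ∂μ, ∀ᶠ n : ℕ in atTop,
        |truncSum T χ (min (f n) (Real.sqrt n)) n ω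
            - ∫ x, truncSum T χ (min (f n) (Real.sqrt n)) n x ∂μ|
          < ε * ∫ x, truncSum T χ (min (f n) (Real.sqrt n)) n x ∂μ :=
  stmt19_general μ T hT χ hχm hχ0 K E hK N hconc f hfpos hflow hint1
end
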